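/- Let (V, +, ·) be a commutative, associative F-algebra structure on a vector space V over a field F which is a radical ring, i.e. (V, ∘) is a group where x∘y = x + y + x·y. For x ∈ V define τ(x) : V → V by y ↦ y∘x. Then each τ(x) is an affine map, and T = { τ(x) : x ∈ V } is an abelian regular subgroup of Aff(V). -/
import Mathlib


theorem stmt {F V : Type*} [Field F] [AddCommGroup V] [Module F V]
    (mul : V →ₗ[F] V →ₗ[F] V)
    (hc : ∀ x y : V, mul x y = mul y x)
    (ha : ∀ x y z : V, mul (mul x y) z = mul x (mul y z))
    (hrad : ∀ x : V, ∃ y : V, x + y + mul x y = 0) :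
    ∃ τ : V → (V ≃ᵃ[F] V), (∀ x y : V, τ x y = y + x + mul y x) ∧
      ∃ T : Subgroup (V ≃ᵃ[F] V),
        (∀ g : V ≃ᵃ[F] V, g ∈ T ↔ ∃ x : V, g = τ x) ∧
        (∀ g ∈ T, ∀ h ∈ T, g * h = h * g) ∧
        (∀ v : V, ∃! g : V ≃ᵃ[F] V, g ∈ T ∧ g 0 = v) := by
  classical
  choose inv hinv using hrad
  -- the key composition law for the underlying map
  have hkey : ∀ x y z : V, (z + y + mul z y) + x + mul (z + y + mul z y) x
      = z + (y + x + mul y x) + mul z (y + x + mul y x) := by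
    intro x y z
    have h1 : mul (z + y + mul z y) x = mul z x + mul y x + mul z (mul y x) := by
      rw [map_add, map_add]
      simp only [LinearMap.add_apply]
      rw [ha]
    have h2 : mul z (y + x + mul y x) = mul z y + mul z x + mul z (mul y x) := by
      rw [map_add, map_add]
    rw [h1, h2]; abel
  -- inverses cancel both ways
  have hinv' : ∀ x : V, inv x + x + mul (inv x) x = 0 := by
    intro x
    have h := hinv x
    rw [hc] at h
    rw [← h]; abel
  -- linear parts
  let L : V → V →ₗ[F] V := fun x => LinearMap.id + mul.flip x
  have hLapp : ∀ x y : V, L x y = y + mul y x := fun _ _ => rfl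
  have hLcomp : ∀ x y : V, (L x).comp (L y) = L (y + x + mul y x) := by
    intro x y
    apply LinearMap.ext
    intro z
    simp only [LinearMap.comp_apply, hLapp]
    have h1 : mul (z + mul z y) x = mul z x + mul z (mul y x) := by
      rw [map_add, LinearMap.add_apply, ha]
    have h2 : mul z (y + x + mul y x) = mul z y + mul z x + mul z (mul y x) := by
      rw [map_add, map_add]
    rw [h1, h2]; abel
  have hL0 : L 0 = LinearMap.id := by
    apply LinearMap.ext; intro z
    simp [hLapp]
  have hLinv1 : ∀ x : V, (L x).comp (L (inv x)) = LinearMap.id := by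
    intro x
    rw [hLcomp, hinv' x, hL0]
  have hLinv2 : ∀ x : V, (L (inv x)).comp (L x) = LinearMap.id := by
    intro x
    rw [hLcomp]
    rw [show x + inv x + mul x (inv x) = 0 from hinv x, hL0]
  let Le : V → (V ≃ₗ[F] V) := fun x =>
    LinearEquiv.ofLinear (L x) (L (inv x)) (hLinv1 x) (hLinv2 x)
  -- the affine equivalences
  have hfun_linv : ∀ x z : V, (z + x + mul z x) + inv x + mul (z + x + mul z x) (inv x) = z := by
    intro x z
    rw [hkey (inv x) x z, hinv x]
    simp
  have hfun_rinv : ∀ x z : V, (z + inv x + mul z (inv x)) + x + mul (z + inv x + mul z (inv x)) x = z := by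
    intro x z
    rw [hkey x (inv x) z, hinv' x]
    simp
  let τ : V → (V ≃ᵃ[F] V) := fun x =>
    { toFun := fun y => y + x + mul y x
      invFun := fun y => y + inv x + mul y (inv x)
      left_inv := fun z => hfun_linv x z
      right_inv := fun z => hfun_rinv x z
      linear := Le x
      map_vadd' := by
        intro p v
        show (v + p) + x + mul (v + p) x = (v + mul v x) + (p + x + mul p x)
        rw [map_add, LinearMap.add_apply]
        abel }
  have hτapp : ∀ x y : V, τ x y = y + x + mul y x := fun _ _ => rfl
  have hτ0 : ∀ x : V, τ x 0 = x := by
    intro x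
    rw [hτapp]
    simp
  have hτmul : ∀ x y : V, τ x * τ y = τ (y + x + mul y x) := by
    intro x y
    apply AffineEquiv.ext
    intro z
    show τ x (τ y z) = _
    rw [hτapp, hτapp, hτapp]
    exact hkey x y z
  have hτone : τ 0 = 1 := by
    apply AffineEquiv.ext
    intro z
    rw [hτapp]
    simp
  refine ⟨τ, hτapp, ?_⟩
  refine ⟨{ carrier := Set.range τ
            mul_mem' := ?_
            one_mem' := ⟨0, hτone⟩
            inv_mem' := ?_ }, ?_, ?_, ?_⟩
  · rintro a b ⟨x, rfl⟩ ⟨y, rfl⟩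
    exact ⟨y + x + mul y x, (hτmul x y).symm⟩
  · rintro a ⟨x, rfl⟩
    refine ⟨inv x, ?_⟩
    apply eq_inv_of_mul_eq_one_left
    rw [hτmul, hinv x, hτone]
  · intro g
    constructor
    · rintro ⟨x, rfl⟩; exact ⟨x, rfl⟩
    · rintro ⟨x, rfl⟩; exact ⟨x, rfl⟩
  · rintro g ⟨x, rfl⟩ h ⟨y, rfl⟩
    rw [hτmul, hτmul, hc y x, add_comm y x]
  · intro v
    refine ⟨τ v, ⟨⟨v, rfl⟩, hτ0 v⟩, ?_⟩
    rintro g ⟨⟨x, rfl⟩, h0⟩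
    rw [hτ0] at h0
    rw [h0]
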